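/- Let P₁, …, Pₙ and p₁, …, pₙ be as follows: Pᵢ smooth projection-valued maps with ∑ Pᵢ = 1, Pᵢ Pⱼ = 0 for i ≠ j, and pᵢ : M → U(1) smooth. Then ∑_{k=1}^n ∑_{i ≠ k} pᵢ⁻¹ dpᵢ ∧ tr(Pᵢ dP_k dP_k) = ∑_{i=1}^n pᵢ⁻¹ dpᵢ ∧ tr(Pᵢ dPᵢ dPᵢ). -/

import Mathlib

attribute [local instance] Matrix.normedAddCommGroup Matrix.normedSpace

/-- Partial derivative in the `a`-th coordinate direction of a matrix-valued map. -/
noncomputable def pdM {m n : ℕ} (a : Fin m)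
    (f : (Fin m → ℝ) → Matrix (Fin n) (Fin n) ℂ) (x : Fin m → ℝ) :
    Matrix (Fin n) (Fin n) ℂ :=
  fderiv ℝ f x (Pi.single a 1)

/-- Partial derivative in the `a`-th coordinate direction of a complex-valued map. -/
noncomputable def pdC {m : ℕ} (a : Fin m)
    (f : (Fin m → ℝ) → ℂ) (x : Fin m → ℝ) : ℂ :=
  fderiv ℝ f x (Pi.single a 1)

/-- The 2-form `tr(Pᵢ dP_k dP_k)` evaluated on the coordinate directions `a, b`. -/
noncomputable def tf {m n : ℕ} (P : Fin n → (Fin m → ℝ) → Matrix (Fin n) (Fin n) ℂ)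
    (i k : Fin n) (a b : Fin m) (x : Fin m → ℝ) : ℂ :=
  (P i x * pdM a (P k) x * pdM b (P k) x).trace
    - (P i x * pdM b (P k) x * pdM a (P k) x).trace

lemma mulBBM {n : ℕ} : IsBoundedBilinearMap ℝ
    (fun p : Matrix (Fin n) (Fin n) ℂ × Matrix (Fin n) (Fin n) ℂ => p.1 * p.2) := by
  constructor
  · intros; exact add_mul _ _ _
  · intros; exact smul_mul_assoc _ _ _
  · intros; exact mul_add _ _ _
  · intros; exact mul_smul_comm _ _ _
  · refine ⟨n + 1, by positivity, fun A B => ?_⟩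
    have h : (0:ℝ) ≤ (n+1) * ‖A‖ * ‖B‖ := by positivity
    rw [Matrix.norm_le_iff h]
    intro i j
    calc ‖(A*B) i j‖ = ‖∑ l, A i l * B l j‖ := rfl
      _ ≤ ∑ l : Fin n, ‖A i l * B l j‖ := norm_sum_le _ _
      _ ≤ ∑ l : Fin n, ‖A‖ * ‖B‖ := by
          refine Finset.sum_le_sum fun l _ => ?_
          rw [norm_mul]
          exact mul_le_mul (Matrix.norm_entry_le_entrywise_sup_norm A)
            (Matrix.norm_entry_le_entrywise_sup_norm B) (norm_nonneg _) (norm_nonneg _)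
      _ = n * (‖A‖ * ‖B‖) := by simp [Finset.sum_const, nsmul_eq_mul]
      _ ≤ (n+1) * ‖A‖ * ‖B‖ := by nlinarith [norm_nonneg A, norm_nonneg B]

lemma pdM_mul {m n : ℕ} (a : Fin m) (f g : (Fin m → ℝ) → Matrix (Fin n) (Fin n) ℂ)
    (hf : Differentiable ℝ f) (hg : Differentiable ℝ g) (x : Fin m → ℝ) :
    pdM a (fun y => f y * g y) x = pdM a f x * g x + f x * pdM a g x := by
  have hb := mulBBM (n := n)
  have h1 : HasFDerivAt (fun y => (f y, g y)) ((fderiv ℝ f x).prod (fderiv ℝ g x)) x :=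
    ((hf x).hasFDerivAt).prodMk ((hg x).hasFDerivAt)
  have h2 : HasFDerivAt (fun y => f y * g y)
      ((hb.deriv (f x, g x)).comp ((fderiv ℝ f x).prod (fderiv ℝ g x))) x := by
    exact (hb.hasFDerivAt (f x, g x)).comp x h1
  rw [pdM]
  refine (congrArg (fun L => L (Pi.single a 1)) h2.fderiv).trans ?_
  simp [pdM, IsBoundedBilinearMap.deriv_apply, add_comm]
  exact hb.deriv_apply _ _

/-- key algebraic trace identity -/
lemma trace_key {n : ℕ} (A A' B B'' B' A'' : Matrix (Fin n) (Fin n) ℂ)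
    (hA : A * A = A) (hB : B * B = B)
    (h1 : A' * B + A * B' = 0) (h4 : B'' * A + B * A'' = 0) :
    (A * B' * B'').trace = (B * A'' * A').trace := by
  have e1 : A * B' = -(A' * B) := eq_neg_of_add_eq_zero_right h1
  have e4 : B'' * A = -(B * A'') := eq_neg_of_add_eq_zero_left h4
  calc (A * B' * B'').trace = ((A * A) * B' * B'').trace := by rw [hA]
    _ = (A * (A * B') * B'').trace := by rw [mul_assoc A A B']
    _ = -((A * A') * (B * B'')).trace := by
        rw [e1]; simp only [mul_neg, neg_mul, Matrix.trace_neg, mul_assoc]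
    _ = -((B * B'') * (A * A')).trace := by rw [Matrix.trace_mul_comm]
    _ = -(B * (B'' * A) * A').trace := by simp only [mul_assoc]
    _ = ((B * B) * A'' * A').trace := by
        rw [e4]; simp only [mul_neg, neg_mul, Matrix.trace_neg, neg_neg, mul_assoc]
    _ = (B * A'' * A').trace := by rw [hB]

lemma tf_antisymm {m n : ℕ} (P : Fin n → (Fin m → ℝ) → Matrix (Fin n) (Fin n) ℂ)
    (hsm : ∀ i, ContDiff ℝ (⊤ : ℕ∞) (P i))
    (hidem : ∀ i x, P i x * P i x = P i x)
    (horth : ∀ i j, i ≠ j → ∀ x, P i x * P j x = 0)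
    (i k : Fin n) (hik : i ≠ k) (a b : Fin m) (x : Fin m → ℝ) :
    tf P i k a b x = - tf P k i a b x := by
  have hdiff : ∀ j, Differentiable ℝ (P j) := fun j => (hsm j).differentiable (by simp)
  -- derivative of the constant functions Pᵢ P_k = 0 and P_k Pᵢ = 0
  have horthD : ∀ (u : Fin m) (i' k' : Fin n), i' ≠ k' →
      pdM u (P i') x * P k' x + P i' x * pdM u (P k') x = 0 := by
    intro u i' k' h
    have hz : (fun y => P i' y * P k' y) = fun _ => (0 : Matrix (Fin n) (Fin n) ℂ) :=
      funext fun y => horth i' k' h y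
    have := pdM_mul u (P i') (P k') (hdiff i') (hdiff k') x
    rw [hz] at this
    rw [← this]
    simp [pdM, fderiv_const]
  have key : ∀ u v : Fin m,
      (P i x * pdM u (P k) x * pdM v (P k) x).trace
        = (P k x * pdM v (P i) x * pdM u (P i) x).trace := by
    intro u v
    exact trace_key (P i x) (pdM u (P i) x) (P k x) (pdM v (P k) x)
      (pdM u (P k) x) (pdM v (P i) x) (hidem i x) (hidem k x)
      (horthD u i k hik) (horthD v k i (Ne.symm hik))
  simp only [tf, key a b, key b a]
  ring

lemma tf_sum_left {m n : ℕ} (P : Fin n → (Fin m → ℝ) → Matrix (Fin n) (Fin n) ℂ)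
    (hsum : ∀ x, ∑ i, P i x = 1) (i : Fin n) (a b : Fin m) (x : Fin m → ℝ) :
    ∑ k : Fin n, tf P k i a b x = 0 := by
  simp only [tf, Finset.sum_sub_distrib]
  have h1 : ∀ u v : Fin m,
      ∑ k : Fin n, (P k x * pdM u (P i) x * pdM v (P i) x).trace
        = (pdM u (P i) x * pdM v (P i) x).trace := by
    intro u v
    rw [← Matrix.trace_sum]
    congr 1
    rw [← Finset.sum_mul, ← Finset.sum_mul, hsum x, one_mul]
  rw [h1 a b, h1 b a, Matrix.trace_mul_comm, sub_self]

lemma tf_erase_sum {m n : ℕ} (P : Fin n → (Fin m → ℝ) → Matrix (Fin n) (Fin n) ℂ)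
    (hsm : ∀ i, ContDiff ℝ (⊤ : ℕ∞) (P i))
    (hidem : ∀ i x, P i x * P i x = P i x)
    (hsum : ∀ x, ∑ i, P i x = 1)
    (horth : ∀ i j, i ≠ j → ∀ x, P i x * P j x = 0)
    (i : Fin n) (a b : Fin m) (x : Fin m → ℝ) :
    ∑ k ∈ Finset.univ.erase i, tf P i k a b x = tf P i i a b x := by
  have h1 : ∑ k ∈ Finset.univ.erase i, tf P i k a b x
      = ∑ k ∈ Finset.univ.erase i, -(tf P k i a b x) := by
    refine Finset.sum_congr rfl fun k hk => ?_
    exact tf_antisymm P hsm hidem horth i k (Ne.symm (Finset.ne_of_mem_erase hk)) a b x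
  rw [h1, Finset.sum_neg_distrib,
    Finset.sum_erase_eq_sub (Finset.mem_univ i), tf_sum_left P hsum i a b x]
  ring

/-- `∑_{k=1}^n ∑_{i ≠ k} pᵢ⁻¹ dpᵢ ∧ tr(Pᵢ dP_k dP_k) = ∑_{i=1}^n pᵢ⁻¹ dpᵢ ∧ tr(Pᵢ dPᵢ dPᵢ)`
as 3-forms, evaluated on the coordinate directions `a, b, c` using the standard formula
`(α ∧ β)(X,Y,Z) = α(X)β(Y,Z) − α(Y)β(X,Z) + α(Z)β(X,Y)` for a 1-form `α` and 2-form `β`. -/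
theorem stmt5 {m n : ℕ}
    (P : Fin n → (Fin m → ℝ) → Matrix (Fin n) (Fin n) ℂ)
    (p : Fin n → (Fin m → ℝ) → ℂ)
    (hsm : ∀ i, ContDiff ℝ (⊤ : ℕ∞) (P i))
    (hherm : ∀ i x, (P i x).IsHermitian)
    (hidem : ∀ i x, P i x * P i x = P i x)
    (hsum : ∀ x, ∑ i, P i x = 1)
    (horth : ∀ i j, i ≠ j → ∀ x, P i x * P j x = 0)
    (hpsm : ∀ i, ContDiff ℝ (⊤ : ℕ∞) (p i))
    (hpcirc : ∀ i x, ‖p i x‖ = 1)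
    (a b c : Fin m) (x : Fin m → ℝ) :
    ∑ k : Fin n, ∑ i ∈ Finset.univ.erase k,
        ((p i x)⁻¹ * pdC a (p i) x * tf P i k b c x
          - (p i x)⁻¹ * pdC b (p i) x * tf P i k a c x
          + (p i x)⁻¹ * pdC c (p i) x * tf P i k a b x)
      = ∑ i : Fin n,
        ((p i x)⁻¹ * pdC a (p i) x * tf P i i b c x
          - (p i x)⁻¹ * pdC b (p i) x * tf P i i a c x
          + (p i x)⁻¹ * pdC c (p i) x * tf P i i a b x) := by
  rw [Finset.sum_comm' (s' := fun i => Finset.univ.erase i) (t' := Finset.univ)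
    (by intro k i; simp [Finset.mem_erase, ne_comm, eq_comm, and_comm])]
  refine Finset.sum_congr rfl fun i _ => ?_
  simp only [Finset.sum_add_distrib, Finset.sum_sub_distrib, ← Finset.mul_sum,
    tf_erase_sum P hsm hidem hsum horth i _ _ x]
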